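/- Let k ≥ 1 be an integer and let P₁,…,P_c (with c ≥ 1) be distinct points of ℙ^p × ℙ^q over ℂ, represented by pairs of nonzero vectors (u₁,w₁),…,(u_c,w_c) with uᵢ ∈ ℂ^{p+1} and wᵢ ∈ ℂ^{q+1}, satisfying the Cayley–Bacharach condition with respect to bihomogeneous forms of bidegree (k,k). If c ≤ 2k + 1, then the points lie on a line of ℙ^p × ℙ^q: either u₁,…,u_c are pairwise proportional and w₁,…,w_c span a linear subspace of ℂ^{q+1} of dimension at most 2, or w₁,…,w_c are pairwise proportional and u₁,…,u_c span a linear subspace of ℂ^{p+1} of dimension at most 2. -/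

import Mathlib

/-- A polynomial in the variables `x₀,…,x_p` (indexed by `Sum.inl`) and `y₀,…,y_q`
(indexed by `Sum.inr`) is bihomogeneous of bidegree `(d, e)` if it is weighted
homogeneous of degree `d` for the weight giving `1` to each `x`-variable and `0` to
each `y`-variable, and weighted homogeneous of degree `e` for the opposite weight. -/
def IsBihomogeneous {K : Type*} [CommSemiring K] {p q : ℕ}
    (F : MvPolynomial (Fin (p + 1) ⊕ Fin (q + 1)) K) (d e : ℕ) : Prop :=
  MvPolynomial.IsWeightedHomogeneous (Sum.elim (fun _ => (1 : ℕ)) (fun _ => 0)) F d ∧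
  MvPolynomial.IsWeightedHomogeneous (Sum.elim (fun _ => (0 : ℕ)) (fun _ => 1)) F e

/-!
A product of `k` linear forms in the `x`-variables and `k` linear forms in the `y`-variables
has bidegree `(k, k)`, so the Cayley–Bacharach condition forbids cutting off one point from the
others by `k` hyperplanes in each factor. Cutting off the other points one hyperplane at a time
shows that every point shares its first or its second coordinate with at least `k + 1` other
points. Distinct points share at most one coordinate and there are at most `2k + 1` of them, so
one coordinate is then common to all points, and the other coordinates are pairwise distinct
points of a projective space satisfying the Cayley–Bacharach condition for products of `k`
linear forms. At most `2k + 1` such points are collinear: cut them by a hyperplane through two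
of them and induct on `k`.
-/

open Finset Module Function Projectivization Submodule

section Separation

open scoped Classical

variable {K V ι : Type*} [Field K] [AddCommGroup V] [Module K V] {v : ι → V}

theorem Submodule.exists_dual_forall_apply_eq_zero_ne_zero {W : Submodule K V} {x : V}
    (hx : x ∉ W) : ∃ f : Dual K V, (∀ y ∈ W, f y = 0) ∧ f x ≠ 0 := by
  obtain ⟨f, hfx, hfW⟩ := W.exists_dual_map_eq_bot_of_notMem hx inferInstance
  exact ⟨f, fun y hy => LinearMap.le_ker_iff_map.mpr hfW hy, hfx⟩

theorem Projectivization.mk_eq_mk_iff_exists_eq_smul {x y : V} (hx : x ≠ 0) (hy : y ≠ 0) :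
    mk K y hy = mk K x hx ↔ ∃ a : K, y = a • x := by
  simp_rw [mk_eq_mk_iff', eq_comm]

theorem Projectivization.exists_dual_apply_eq_zero_ne_zero {x y : V} (hx : x ≠ 0) (hy : y ≠ 0)
    (hxy : mk K x hx ≠ mk K y hy) : ∃ f : Dual K V, f x = 0 ∧ f y ≠ 0 := by
  have hy' : y ∉ K ∙ x := fun h =>
    hxy ((mk_eq_mk_iff' K y x hy hx).mpr (mem_span_singleton.mp h)).symm
  obtain ⟨f, hf, hfy⟩ := exists_dual_forall_apply_eq_zero_ne_zero hy'
  exact ⟨f, hf x (mem_span_singleton_self x), hfy⟩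

theorem Projectivization.exists_finset_dual_forall_apply_eq_zero (hv : ∀ i, v i ≠ 0) {i : ι}
    (T : Finset ι) (hT : ∀ j ∈ T, mk K (v j) (hv j) ≠ mk K (v i) (hv i)) :
    ∃ A : Finset (Dual K V), #A ≤ #T ∧ (∀ f ∈ A, f (v i) ≠ 0) ∧
      ∀ j ∈ T, ∃ f ∈ A, f (v j) = 0 := by
  choose! g hg hgi using fun j hj => exists_dual_apply_eq_zero_ne_zero (hv j) (hv i) (hT j hj)
  refine ⟨T.image g, card_image_le, ?_, fun j hj => ⟨g j, mem_image_of_mem g hj, hg j hj⟩⟩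
  simpa only [mem_image, forall_exists_index, and_imp, forall_apply_eq_imp_iff₂] using hgi

theorem finrank_span_image_finset_le_card (v : ι → V) (t : Finset ι) :
    finrank K (span K (v '' t)) ≤ #t := by
  rw [← coe_image]
  exact (finrank_span_finset_le_card _).trans card_image_le

theorem exists_mem_notMem_span_image_of_finrank_lt {s t : Finset ι}
    (h : finrank K (span K (v '' t)) < finrank K (span K (v '' s))) :
    ∃ j ∈ s, v j ∉ span K (v '' t) := by
  by_contra! hs
  have := Module.Finite.span_of_finite K (t.finite_toSet.image v)
  exact h.not_ge (finrank_mono (span_le.mpr (by rintro _ ⟨j, hj, rfl⟩; exact hs j hj)))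

theorem exists_dual_two_le_card_filter_apply_eq_zero {s : Finset ι}
    (hs : 2 < finrank K (span K (v '' s))) :
    ∃ g : Dual K V, 2 ≤ #{j ∈ s | g (v j) = 0} ∧ ∃ j ∈ s, g (v j) ≠ 0 := by
  obtain ⟨a, ha, b, hb, hab⟩ :=
    one_lt_card.mp (one_lt_two.trans (hs.trans_le (finrank_span_image_finset_le_card v s)))
  obtain ⟨j, hj, hjab⟩ := exists_mem_notMem_span_image_of_finrank_lt (t := {a, b})
    (hs.trans_le' ((finrank_span_image_finset_le_card v _).trans card_le_two))
  obtain ⟨g, hg, hgj⟩ := exists_dual_forall_apply_eq_zero_ne_zero hjab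
  have hsub : {a, b} ⊆ {j ∈ s | g (v j) = 0} := fun l hl =>
    mem_filter.mpr ⟨insert_subset ha (singleton_subset_iff.mpr hb) hl,
      hg _ (subset_span ⟨l, hl, rfl⟩)⟩
  exact ⟨g, (card_pair hab).ge.trans (card_le_card hsub), j, hj, hgj⟩

end Separation

section CayleyBacharachLinear

variable (K : Type*) {V ι : Type*} [Field K] [AddCommGroup V] [Module K V]

/-- The Cayley–Bacharach condition with respect to unions of `n` hyperplanes, i.e. zero sets of
products of `n` linear forms. -/
def CayleyBacharachLinear (v : ι → V) (s : Finset ι) (n : ℕ) : Prop :=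
  ∀ i ∈ s, ∀ A : Finset (Dual K V), #A ≤ n →
    (∀ j ∈ s, j ≠ i → ∃ f ∈ A, f (v j) = 0) → ∃ f ∈ A, f (v i) = 0

namespace CayleyBacharachLinear

open scoped Classical

variable {K} {v : ι → V} {s : Finset ι} {n : ℕ}

theorem filter_apply_ne_zero (h : CayleyBacharachLinear K v s (n + 1)) (g : Dual K V) :
    CayleyBacharachLinear K v {j ∈ s | g (v j) ≠ 0} n := by
  intro i hi A hA hkill
  rw [mem_filter] at hi
  obtain ⟨f, hf, hfi⟩ := h i hi.1 (insert g A) ((card_insert_le g A).trans (by omega))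
    fun j hj hji => by
      by_cases hg : g (v j) = 0
      · exact ⟨g, mem_insert_self g A, hg⟩
      · obtain ⟨f, hf, hfj⟩ := hkill j (mem_filter.mpr ⟨hj, hg⟩) hji
        exact ⟨f, mem_insert_of_mem hf, hfj⟩
  rcases mem_insert.mp hf with rfl | hf
  · exact absurd hfi hi.2
  · exact ⟨f, hf, hfi⟩

theorem lt_card_add_card_filter (hv : ∀ i, v i ≠ 0) (hinj : Injective fun i => mk K (v i) (hv i))
    (h : CayleyBacharachLinear K v s n) {i : ι} (hi : i ∈ s) {A : Finset (Dual K V)}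
    (hA : ∀ f ∈ A, f (v i) ≠ 0) : n < #A + #{j ∈ s.erase i | ∀ f ∈ A, f (v j) ≠ 0} := by
  set U := {j ∈ s.erase i | ∀ f ∈ A, f (v j) ≠ 0}
  obtain ⟨B, hB, hBi, hBU⟩ := exists_finset_dual_forall_apply_eq_zero hv U
    fun j hj => hinj.ne (mem_erase.mp (mem_filter.mp hj).1).1
  by_contra! hle
  obtain ⟨f, hf, hfi⟩ := h i hi (A ∪ B) ((card_union_le A B).trans (by omega))
    fun j hj hji => by
      by_cases hjU : j ∈ U
      · obtain ⟨f, hf, hfj⟩ := hBU j hjU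
        exact ⟨f, mem_union_right A hf, hfj⟩
      · obtain ⟨f, hf, hfj⟩ : ∃ f ∈ A, f (v j) = 0 := by simpa [U, hj, hji] using hjU
        exact ⟨f, mem_union_left B hf, hfj⟩
  rcases mem_union.mp hf with hf | hf
  exacts [hA f hf hfi, hBi f hf hfi]

theorem add_two_le_card (hv : ∀ i, v i ≠ 0) (hinj : Injective fun i => mk K (v i) (hv i))
    (h : CayleyBacharachLinear K v s n) {i : ι} (hi : i ∈ s) : n + 2 ≤ #s := by
  have := lt_card_add_card_filter hv hinj h hi (A := ∅) (by simp)
  rw [card_empty, zero_add, filter_true_of_mem (by simp), card_erase_of_mem hi] at this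
  omega

theorem add_one_le_card_filter_notMem (hv : ∀ i, v i ≠ 0)
    (hinj : Injective fun i => mk K (v i) (hv i)) (h : CayleyBacharachLinear K v s n)
    {W : Submodule K V} {i : ι} (hi : i ∈ s) (hiW : v i ∉ W) :
    n + 1 ≤ #{j ∈ s | v j ∉ W} := by
  obtain ⟨g, hgW, hgi⟩ := W.exists_dual_forall_apply_eq_zero_ne_zero hiW
  have hlt := lt_card_add_card_filter hv hinj h hi (A := {g}) (by simpa)
  have hsub : {j ∈ s.erase i | ∀ f ∈ ({g} : Finset _), f (v j) ≠ 0} ⊆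
      {j ∈ s | v j ∉ W}.erase i := by
    intro j
    simp only [mem_filter, mem_erase, mem_singleton, forall_eq]
    exact fun ⟨⟨hji, hj⟩, hgj⟩ => ⟨hji, hj, fun hjW => hgj (hgW _ hjW)⟩
  rw [← card_erase_add_one (mem_filter.mpr ⟨hi, hiW⟩)]
  rw [card_singleton] at hlt
  have := card_le_card hsub
  omega

theorem two_mul_add_two_le_card (hv : ∀ i, v i ≠ 0) (hinj : Injective fun i => mk K (v i) (hv i))
    (h : CayleyBacharachLinear K v s n) (hs : 2 < finrank K (span K (v '' s))) :
    2 * n + 2 ≤ #s := by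
  induction n generalizing s with
  | zero => have := finrank_span_image_finset_le_card (K := K) v s; omega
  | succ n ih =>
    -- Off a hyperplane `g` through two of the points, the condition holds for `n` forms. Either
    -- the points off `g` still span more than a plane and induction applies, or they span a
    -- plane `V'` and then at least `n + 2` points lie on `V'` and at least `n + 2` off it.
    obtain ⟨g, hg, j₀, hj₀, hgj₀⟩ := exists_dual_two_le_card_filter_apply_eq_zero hs
    set s' := {j ∈ s | g (v j) ≠ 0}
    have h' := h.filter_apply_ne_zero g
    have hsplit : #{j ∈ s | g (v j) = 0} + #s' = #s := card_filter_add_card_filter_not _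
    by_cases hs' : 2 < finrank K (span K (v '' s'))
    · have : 2 * n + 2 ≤ #s' := ih h' hs'
      omega
    obtain ⟨i, hi, hiV⟩ :=
      exists_mem_notMem_span_image_of_finrank_lt (K := K) (v := v) (s := s) (t := s') (by omega)
    have hout := add_one_le_card_filter_notMem hv hinj h hi hiV
    have hin : n + 2 ≤ #s' := add_two_le_card hv hinj h' (mem_filter.mpr ⟨hj₀, hgj₀⟩)
    have hsub : s' ⊆ {j ∈ s | v j ∈ span K (v '' s')} :=
      fun j hj => mem_filter.mpr ⟨filter_subset _ _ hj, subset_span ⟨j, hj, rfl⟩⟩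
    have := card_le_card hsub
    have := card_filter_add_card_filter_not (s := s) fun j => v j ∈ span K (v '' s')
    omega

theorem finrank_span_image_le_two (hv : ∀ i, v i ≠ 0)
    (hinj : Injective fun i => mk K (v i) (hv i)) (h : CayleyBacharachLinear K v s n)
    (hs : #s ≤ 2 * n + 1) : finrank K (span K (v '' s)) ≤ 2 := by
  by_contra! hrank
  have := two_mul_add_two_le_card hv hinj h hrank
  omega

end CayleyBacharachLinear

end CayleyBacharachLinear

section LinearFormPoly

open MvPolynomial

variable {K σ τ : Type*} [CommSemiring K] [Fintype τ] [DecidableEq τ]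

noncomputable def linearFormPoly (ι : τ → σ) (f : Dual K (τ → K)) : MvPolynomial σ K :=
  ∑ t, C (f (Pi.single t 1)) * X (ι t)

theorem eval_linearFormPoly (ι : τ → σ) (f : Dual K (τ → K)) (x : σ → K) :
    eval x (linearFormPoly ι f) = f (x ∘ ι) := by
  conv_rhs => rw [← univ_sum_single (x ∘ ι), map_sum]
  simp only [linearFormPoly, map_sum, map_mul, eval_C, eval_X]
  refine sum_congr rfl fun t _ => ?_
  rw [comp_apply, mul_comm, ← smul_eq_mul, ← map_smul, ← Pi.single_smul', smul_eq_mul, mul_one]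

variable {M : Type*} [AddCommMonoid M] {ω : σ → M} {m : M} {ι : τ → σ}

theorem isWeightedHomogeneous_linearFormPoly (hω : ∀ t, ω (ι t) = m) (f : Dual K (τ → K)) :
    IsWeightedHomogeneous ω (linearFormPoly ι f) m :=
  IsWeightedHomogeneous.sum _ _ _ fun t _ => hω t ▸ (isWeightedHomogeneous_X K ω (ι t)).C_mul _

theorem isWeightedHomogeneous_prod_linearFormPoly_mul_pow (hω : ∀ t, ω (ι t) = m)
    {A : Finset (Dual K (τ → K))} {k : ℕ} (hA : #A ≤ k) (f₀ : Dual K (τ → K)) :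
    IsWeightedHomogeneous ω
      ((∏ f ∈ A, linearFormPoly ι f) * linearFormPoly ι f₀ ^ (k - #A)) (k • m) := by
  have := (IsWeightedHomogeneous.prod A _ (fun _ => m)
    fun f _ => isWeightedHomogeneous_linearFormPoly hω f).mul
      ((isWeightedHomogeneous_linearFormPoly hω f₀).pow (k - #A))
  rwa [sum_const, ← add_smul, Nat.add_sub_cancel' hA] at this

end LinearFormPoly

section Fibers

variable {ι α β : Type*} [Fintype ι] [DecidableEq α] [DecidableEq β] {P : ι → α} {Q : ι → β}
  {n : ℕ}

theorem eq_of_le_card_fiber (hn : Fintype.card ι < 2 * n) {i j : ι}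
    (hi : n ≤ #{l | P l = P i}) (hj : n ≤ #{l | P l = P j}) : P i = P j := by
  classical
  by_contra hij
  have hdisj : Disjoint ({l | P l = P i} : Finset ι) ({l | P l = P j} : Finset ι) :=
    disjoint_filter.mpr fun l _ (hli : P l = P i) hlj => hij (hli.symm.trans hlj)
  have := card_union_of_disjoint hdisj ▸ card_le_univ _
  omega

theorem card_fiber_lt_of_injective (hPQ : Injective fun i => (P i, Q i))
    (hn : Fintype.card ι + 2 ≤ 2 * n) {i : ι} (hi : n ≤ #{l | P l = P i}) (j : ι) :
    #{l | Q l = Q j} < n := by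
  classical
  by_contra! hj
  set FP : Finset ι := {l | P l = P i}
  set FQ : Finset ι := {l | Q l = Q j}
  have hinter : #(FP ∩ FQ) ≤ 1 := card_le_one.mpr fun a ha b hb => by
    simp only [FP, FQ, mem_inter, mem_filter, mem_univ, true_and] at ha hb
    exact hPQ (Prod.ext (ha.1.trans hb.1.symm) (ha.2.trans hb.2.symm))
  have := card_union_add_card_inter FP FQ
  have := card_le_univ (FP ∪ FQ)
  omega

theorem forall_eq_of_le_card_fiber (hPQ : Injective fun i => (P i, Q i))
    (hn : Fintype.card ι + 2 ≤ 2 * n)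
    (hfib : ∀ i, n ≤ #{l | P l = P i} ∨ n ≤ #{l | Q l = Q i}) {i₀ : ι}
    (hi₀ : n ≤ #{l | P l = P i₀}) (i j : ι) : P i = P j := by
  have hP (i : ι) : P i = P i₀ := eq_of_le_card_fiber (by omega)
    ((hfib i).resolve_right (card_fiber_lt_of_injective hPQ hn hi₀ i).not_ge) hi₀
  rw [hP i, hP j]

theorem forall_eq_or_forall_eq_of_le_card_fiber (hPQ : Injective fun i => (P i, Q i))
    (hn : Fintype.card ι + 2 ≤ 2 * n)
    (hfib : ∀ i, n ≤ #{l | P l = P i} ∨ n ≤ #{l | Q l = Q i}) :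
    (∀ i j, P i = P j) ∨ ∀ i j, Q i = Q j := by
  cases isEmpty_or_nonempty ι with
  | inl _ => exact .inl fun i => isEmptyElim i
  | inr h =>
    obtain ⟨i₀⟩ := h
    rcases hfib i₀ with hi₀ | hi₀
    · exact .inl (forall_eq_of_le_card_fiber hPQ hn hfib hi₀)
    · exact .inr (forall_eq_of_le_card_fiber (Prod.swap_injective.comp hPQ) hn
        (fun i => (hfib i).symm) hi₀)

end Fibers

theorem Finset.exists_subset_card_le_card_sdiff_le {α : Type*} [DecidableEq α]
    {s t r : Finset α} {k : ℕ} (hts : t ⊆ s \ r) (hrs : r ⊆ s) (ht : #t ≤ k) (hr : #r ≤ k)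
    (hs : #s ≤ 2 * k) : ∃ T, t ⊆ T ∧ T ⊆ s \ r ∧ #T ≤ k ∧ #(s \ T) ≤ k := by
  obtain ⟨T, htT, hTs, hT⟩ := exists_subsuperset_card_eq hts (le_max_left #t (#s - k))
    (max_le (card_le_card hts) (by rw [card_sdiff_of_subset hrs]; omega))
  refine ⟨T, htT, hTs, by omega, ?_⟩
  rw [card_sdiff_of_subset (hTs.trans sdiff_subset)]
  omega

section Bihomogeneous

open MvPolynomial

variable {K ι : Type*} [Field K] {p q : ℕ}

def CayleyBacharachBihom (u : ι → Fin (p + 1) → K) (w : ι → Fin (q + 1) → K) (d e : ℕ) :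
    Prop :=
  ∀ F : MvPolynomial (Fin (p + 1) ⊕ Fin (q + 1)) K, IsBihomogeneous F d e →
    ∀ i, (∀ j, j ≠ i → eval (Sum.elim (u j) (w j)) F = 0) → eval (Sum.elim (u i) (w i)) F = 0

namespace CayleyBacharachBihom

variable {u : ι → Fin (p + 1) → K} {w : ι → Fin (q + 1) → K} {k : ℕ}

theorem exists_apply_eq_zero (hCB : CayleyBacharachBihom u w k k) {i : ι} (hu : u i ≠ 0)
    (hw : w i ≠ 0) {A : Finset (Dual K (Fin (p + 1) → K))}
    {B : Finset (Dual K (Fin (q + 1) → K))} (hA : #A ≤ k) (hB : #B ≤ k)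
    (hAB : ∀ j, j ≠ i → (∃ f ∈ A, f (u j) = 0) ∨ ∃ g ∈ B, g (w j) = 0) :
    (∃ f ∈ A, f (u i) = 0) ∨ ∃ g ∈ B, g (w i) = 0 := by
  by_contra! hi
  -- the powers of `f₀` and `g₀` pad the bidegree up to `(k, k)` without vanishing at `i`
  obtain ⟨f₀, hf₀⟩ := Projective.exists_dual_ne_zero K hu
  obtain ⟨g₀, hg₀⟩ := Projective.exists_dual_ne_zero K hw
  set F := (∏ f ∈ A, linearFormPoly Sum.inl f) * linearFormPoly Sum.inl f₀ ^ (k - #A) *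
    ((∏ g ∈ B, linearFormPoly Sum.inr g) * linearFormPoly Sum.inr g₀ ^ (k - #B))
  have hF (a b : ℕ) :
      IsWeightedHomogeneous (Sum.elim (fun _ => a) (fun _ => b)) F (k • a + k • b) :=
    (isWeightedHomogeneous_prod_linearFormPoly_mul_pow (ι := Sum.inl) (m := a) (fun _ => rfl)
      hA f₀).mul
      (isWeightedHomogeneous_prod_linearFormPoly_mul_pow (ι := Sum.inr) (m := b) (fun _ => rfl)
        hB g₀)
  have heval (j : ι) : eval (Sum.elim (u j) (w j)) F =
      (∏ f ∈ A, f (u j)) * f₀ (u j) ^ (k - #A) * ((∏ g ∈ B, g (w j)) * g₀ (w j) ^ (k - #B)) := by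
    simp only [F, map_mul, map_prod, map_pow, eval_linearFormPoly, Sum.elim_comp_inl,
      Sum.elim_comp_inr]
  have := hCB F ⟨by simpa using hF 1 0, by simpa using hF 0 1⟩ i fun j hj => by
    rw [heval]
    rcases hAB j hj with ⟨f, hf, hfj⟩ | ⟨g, hg, hgj⟩
    · rw [prod_eq_zero hf hfj, zero_mul, zero_mul]
    · rw [prod_eq_zero hg hgj, zero_mul, mul_zero]
  rw [heval] at this
  simp only [mul_eq_zero, prod_eq_zero_iff, pow_eq_zero_iff', hf₀, hg₀, false_and, or_false]
    at this
  rcases this with ⟨f, hf, hfi⟩ | ⟨g, hg, hgi⟩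
  exacts [hi.1 f hf hfi, hi.2 g hg hgi]

theorem cayleyBacharachLinear_fst [Fintype ι] (hCB : CayleyBacharachBihom u w k k)
    (hu : ∀ i, u i ≠ 0) (hw : ∀ i, w i ≠ 0) : CayleyBacharachLinear K u univ k :=
  fun i _ A hA hAi => by
    simpa using hCB.exists_apply_eq_zero (hu i) (hw i) hA (B := ∅) (Nat.zero_le k)
      fun j hj => .inl (hAi j (mem_univ j) hj)

theorem cayleyBacharachLinear_snd [Fintype ι] (hCB : CayleyBacharachBihom u w k k)
    (hu : ∀ i, u i ≠ 0) (hw : ∀ i, w i ≠ 0) : CayleyBacharachLinear K w univ k :=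
  fun i _ B hB hBi => by
    simpa using hCB.exists_apply_eq_zero (hu i) (hw i) (A := ∅) (Nat.zero_le k) hB
      fun j hj => .inr (hBi j (mem_univ j) hj)

open scoped Classical in
theorem add_two_le_card_fiber [Fintype ι] (hCB : CayleyBacharachBihom u w k k)
    (hu : ∀ i, u i ≠ 0) (hw : ∀ i, w i ≠ 0)
    (hinj : Injective fun i => (mk K (u i) (hu i), mk K (w i) (hw i)))
    (hc : Fintype.card ι ≤ 2 * k + 1) (i : ι) :
    k + 2 ≤ #{j | mk K (u j) (hu j) = mk K (u i) (hu i)} ∨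
      k + 2 ≤ #{j | mk K (w j) (hw j) = mk K (w i) (hw i)} := by
  by_contra! hsmall
  -- Otherwise the other points split into a set `T` of at most `k` points whose first
  -- coordinate differs from that of `i` and at most `k` points whose second coordinate does,
  -- and `k + k` hyperplanes cut them all off from `i`.
  set X := ({j | mk K (u j) (hu j) = mk K (u i) (hu i)} : Finset ι).erase i
  set Y := ({j | mk K (w j) (hw j) = mk K (w i) (hw i)} : Finset ι).erase i
  have hYX : Y ⊆ univ.erase i \ X := by
    intro j hj
    simp only [X, Y, mem_sdiff, mem_erase, mem_filter, mem_univ, true_and, and_true] at hj ⊢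
    exact ⟨hj.1, fun hjX => hj.1 (hinj (Prod.ext hjX.2 hj.2))⟩
  obtain ⟨T, hYT, hTX, hT, hTc⟩ := exists_subset_card_le_card_sdiff_le (k := k) hYX
    (erase_subset_erase i (subset_univ _))
    (by simp only [Y]; rw [card_erase_of_mem (by simp)]; omega)
    (by simp only [X]; rw [card_erase_of_mem (by simp)]; omega)
    (by rw [card_erase_of_mem (mem_univ i), card_univ]; omega)
  obtain ⟨A, hA, hAi, hAT⟩ := exists_finset_dual_forall_apply_eq_zero hu T fun j hj => by
    have := hTX hj
    simp only [X, mem_sdiff, mem_erase, mem_filter, mem_univ, true_and, and_true] at this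
    exact fun h => this.2 ⟨this.1, h⟩
  obtain ⟨B, hB, hBi, hBT⟩ := exists_finset_dual_forall_apply_eq_zero hw (univ.erase i \ T)
    fun j hj h => by
      obtain ⟨hji, hjT⟩ := mem_sdiff.mp hj
      exact hjT (hYT (mem_erase.mpr ⟨(mem_erase.mp hji).1, mem_filter.mpr ⟨mem_univ j, h⟩⟩))
  rcases hCB.exists_apply_eq_zero (hu i) (hw i) (hA.trans hT) (hB.trans hTc) fun j hji => by
      by_cases hj : j ∈ T
      · exact .inl (hAT j hj)
      · exact .inr (hBT j (mem_sdiff.mpr ⟨mem_erase.mpr ⟨hji, mem_univ j⟩, hj⟩)) with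
    ⟨f, hf, hfi⟩ | ⟨g, hg, hgi⟩
  exacts [hAi f hf hfi, hBi g hg hgi]

end CayleyBacharachBihom

end Bihomogeneous

theorem cayley_bacharach_line_product_general
    (p q k c : ℕ)
    (u : Fin c → (Fin (p + 1) → ℂ)) (w : Fin c → (Fin (q + 1) → ℂ))
    (hu0 : ∀ i, u i ≠ 0) (hw0 : ∀ i, w i ≠ 0)
    (hdist : ∀ i j, i ≠ j →
      ¬ ((∃ a : ℂ, u j = a • u i) ∧ (∃ b : ℂ, w j = b • w i)))
    (hCB : ∀ F : MvPolynomial (Fin (p + 1) ⊕ Fin (q + 1)) ℂ, IsBihomogeneous F k k →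
      ∀ i : Fin c, (∀ j, j ≠ i → MvPolynomial.eval (Sum.elim (u j) (w j)) F = 0) →
        MvPolynomial.eval (Sum.elim (u i) (w i)) F = 0)
    (hck : c ≤ 2 * k + 1) :
    ((∀ i j, ∃ a : ℂ, u j = a • u i) ∧
      Module.finrank ℂ ↥(Submodule.span ℂ (Set.range w)) ≤ 2) ∨
    ((∀ i j, ∃ b : ℂ, w j = b • w i) ∧
      Module.finrank ℂ ↥(Submodule.span ℂ (Set.range u)) ≤ 2) := by
  classical
  have hCB' : CayleyBacharachBihom u w k k := hCB
  have hinj : Injective fun i => (mk ℂ (u i) (hu0 i), mk ℂ (w i) (hw0 i)) := fun i j hij => by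
    by_contra hne
    obtain ⟨hiju, hijw⟩ := Prod.mk.inj hij
    exact hdist i j hne ⟨(mk_eq_mk_iff_exists_eq_smul _ _).mp hiju.symm,
      (mk_eq_mk_iff_exists_eq_smul _ _).mp hijw.symm⟩
  have hc : Fintype.card (Fin c) ≤ 2 * k + 1 := by simpa using hck
  rcases forall_eq_or_forall_eq_of_le_card_fiber hinj (by omega)
    (hCB'.add_two_le_card_fiber hu0 hw0 hinj hc) with hu | hw
  · refine .inl ⟨fun i j => (mk_eq_mk_iff_exists_eq_smul _ _).mp (hu j i), ?_⟩
    have := (hCB'.cayleyBacharachLinear_snd hu0 hw0).finrank_span_image_le_two hw0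
      (fun i j h => hinj (Prod.ext (hu i j) h)) hc
    rwa [coe_univ, Set.image_univ] at this
  · refine .inr ⟨fun i j => (mk_eq_mk_iff_exists_eq_smul _ _).mp (hw j i), ?_⟩
    have := (hCB'.cayleyBacharachLinear_fst hu0 hw0).finrank_span_image_le_two hu0
      (fun i j h => hinj (Prod.ext h (hw i j))) hc
    rwa [coe_univ, Set.image_univ] at this

/-- **Cayley–Bacharach collinearity in a product of projective spaces.**
If `c ≥ 1` distinct points of `ℙ^p × ℙ^q` over ℂ satisfy the Cayley–Bacharach
condition with respect to bihomogeneous forms of bidegree `(k, k)` with `k ≥ 1` and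
`c ≤ 2k + 1`, then the points lie on a line of `ℙ^p × ℙ^q`: either all the first
components are pairwise proportional and the second components span a subspace of
`ℂ^{q+1}` of dimension at most 2, or symmetrically. -/
theorem cayley_bacharach_line_product
    (p q k c : ℕ) (hk : 1 ≤ k) (hc : 1 ≤ c)
    (u : Fin c → (Fin (p + 1) → ℂ)) (w : Fin c → (Fin (q + 1) → ℂ))
    (hu0 : ∀ i, u i ≠ 0) (hw0 : ∀ i, w i ≠ 0)
    (hdist : ∀ i j, i ≠ j →
      ¬ ((∃ a : ℂ, u j = a • u i) ∧ (∃ b : ℂ, w j = b • w i)))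
    (hCB : ∀ F : MvPolynomial (Fin (p + 1) ⊕ Fin (q + 1)) ℂ, IsBihomogeneous F k k →
      ∀ i : Fin c, (∀ j, j ≠ i → MvPolynomial.eval (Sum.elim (u j) (w j)) F = 0) →
        MvPolynomial.eval (Sum.elim (u i) (w i)) F = 0)
    (hck : c ≤ 2 * k + 1) :
    ((∀ i j, ∃ a : ℂ, u j = a • u i) ∧
      Module.finrank ℂ ↥(Submodule.span ℂ (Set.range w)) ≤ 2) ∨
    ((∀ i j, ∃ b : ℂ, w j = b • w i) ∧
      Module.finrank ℂ ↥(Submodule.span ℂ (Set.range u)) ≤ 2) :=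
  cayley_bacharach_line_product_general p q k c u w hu0 hw0 hdist hCB hck
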